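/- Let A and S be 2×2 real symmetric matrices with tr(A S) = 0, S invertible, and λ I ≤ A ≤ Λ I in the Loewner order for constants 0 < λ ≤ Λ. Set K = det(A) det(S) (so K < 0), M = S A² S, and c = (Λ/λ)² (Λ/λ + λ/Λ). Then M is symmetric positive definite and for every v ∈ ℝ²: c⁻¹ (−1/K) |v|² ≤ ⟨M⁻¹ v, v⟩ ≤ c (−1/K) |v|². (This is the pointwise content of the comparison between the induced metric and the pullback metric via the anisotropic Gauss map on a γ-anisotropic minimal surface at a regular point of the anisotropic Gauss map.) -/

import Mathlib

/-!
Put `X = A S`. Then `M = Xᵀ X`, `det X = K` and `tr X = 0`, so Cayley–Hamilton gives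
`tr (A S A S) = tr X² = -2K`; since `tr (A · S A S) ≥ 0` (a trace of a product of positive
semidefinite matrices) and `K ≠ 0`, `K < 0`.

With `P = A - λ` and `Q = Λ - A`,
`(λ² + Λ²) tr (A S A S) - 2λΛ tr (S A² S) = Λ² tr (P S P S) + λ² tr (Q S Q S) + 2λΛ tr (P Q S²)`,
and every term on the right is nonnegative (`P Q ≥ 0` because `P` and `Q` commute). Hence
`tr M = tr (S A² S) ≤ (Λ/λ + λ/Λ)(-K) ≤ c (-K)`.

Finally, a positive definite `2 × 2` matrix has `M⁻¹ = (tr M - M) / det M`, so `⟨M⁻¹ v, v⟩` lies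
between `|v|² / tr M` and `(tr M / det M) |v|²`, and `det M = K²`.
-/

open Matrix
open scoped MatrixOrder

namespace Matrix
variable {n : Type*} [Fintype n]

theorem PosSemidef.mul_mul_same_of_isSymm {X S : Matrix n n ℝ} (hX : X.PosSemidef)
    (hS : S.IsSymm) : (S * X * S).PosSemidef := by
  simpa [conjTranspose_eq_transpose_of_trivial, hS.eq] using hX.conjTranspose_mul_mul_same S

theorem mul_mul_mul_eq_conjTranspose_mul_self_of_isSymm {A S : Matrix n n ℝ} (hA : A.IsSymm)
    (hS : S.IsSymm) : S * (A * A) * S = (A * S)ᴴ * (A * S) := by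
  rw [conjTranspose_mul, conjTranspose_eq_transpose_of_trivial,
    conjTranspose_eq_transpose_of_trivial, hA.eq, hS.eq]
  simp only [Matrix.mul_assoc]

variable [DecidableEq n]

theorem PosSemidef.trace_mul_nonneg {P N : Matrix n n ℝ} (hP : P.PosSemidef) (hN : N.PosSemidef) :
    0 ≤ (P * N).trace := by
  obtain ⟨B, rfl⟩ := CStarAlgebra.nonneg_iff_eq_star_mul_self.mp hP.nonneg
  rw [star_eq_conjTranspose, Matrix.mul_assoc, trace_mul_comm]
  exact (hN.mul_mul_conjTranspose_same B).trace_nonneg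

theorem two_mul_mul_trace_conj_sq_le {A S : Matrix n n ℝ} (hS : S.IsSymm) {lam Lam : ℝ}
    (hlam : 0 ≤ lam) (hlamLam : lam ≤ Lam)
    (hlow : (A - lam • 1).PosSemidef) (hupp : (Lam • 1 - A).PosSemidef) :
    2 * (lam * Lam) * (S * (A * A) * S).trace ≤ (lam ^ 2 + Lam ^ 2) * (A * S * A * S).trace := by
  set P := A - lam • 1 with hP
  set Q := Lam • 1 - A with hQ
  have hPQ : Commute P Q :=
    ((Commute.one_right P).smul_right Lam).sub_right
      ((Commute.refl A).sub_left ((Commute.one_left A).smul_left lam))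
  have hSS : (S * S).PosSemidef := by simpa using PosSemidef.one.mul_mul_same_of_isSymm hS
  have hPQpos : (P * Q).PosSemidef := by
    rw [← nonneg_iff_posSemidef] at hlow hupp ⊢
    exact hPQ.mul_nonneg hlow hupp
  have key : (lam ^ 2 + Lam ^ 2) * (A * S * A * S).trace - 2 * (lam * Lam) * (S * (A * A) * S).trace
      = Lam ^ 2 * (P * (S * P * S)).trace + lam ^ 2 * (Q * (S * Q * S)).trace
        + 2 * (lam * Lam) * (P * Q * (S * S)).trace := by
    -- already an identity of matrices once multiplied by `S`; cyclicity of `trace` does the rest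
    have hid :
        S * ((lam ^ 2 + Lam ^ 2) • (A * S * A) - (lam * Lam) • (A * A * S + S * (A * A))) =
          S * (Lam ^ 2 • (P * S * P) + lam ^ 2 • (Q * S * Q)
            + (lam * Lam) • (P * Q * S + S * (P * Q))) := by
      simp only [hP, hQ, mul_sub, sub_mul, smul_mul_assoc, mul_smul_comm, one_mul, mul_one,
        smul_sub, smul_add, mul_add, smul_smul, mul_assoc]
      module
    have htr := congrArg trace hid
    simp only [mul_add, mul_sub, mul_smul_comm, trace_add, trace_sub, trace_smul, smul_eq_mul]
      at htr
    have e1 : (A * S * A * S).trace = (S * (A * S * A)).trace := trace_mul_comm _ _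
    have e2 : (S * (A * A) * S).trace = (S * (A * A * S)).trace := by rw [Matrix.mul_assoc]
    have e3 : (S * (A * A) * S).trace = (S * (S * (A * A))).trace := trace_mul_comm _ _
    have e4 : (P * (S * P * S)).trace = (S * (P * S * P)).trace := by
      rw [trace_mul_comm]; simp only [Matrix.mul_assoc]
    have e5 : (Q * (S * Q * S)).trace = (S * (Q * S * Q)).trace := by
      rw [trace_mul_comm]; simp only [Matrix.mul_assoc]
    have e6 : (P * Q * (S * S)).trace = (S * (S * (P * Q))).trace := by
      rw [trace_mul_comm]; simp only [Matrix.mul_assoc]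
    have e7 : (P * Q * (S * S)).trace = (S * (P * Q * S)).trace := by
      rw [trace_mul_comm S]; simp only [Matrix.mul_assoc]
    linear_combination htr + (lam ^ 2 + Lam ^ 2) * e1 - (lam * Lam) * (e2 + e3) - Lam ^ 2 * e4
      - lam ^ 2 * e5 - (lam * Lam) * (e6 + e7)
  have h1 := hlow.trace_mul_nonneg (hlow.mul_mul_same_of_isSymm hS)
  have h2 := hupp.trace_mul_nonneg (hupp.mul_mul_same_of_isSymm hS)
  have h3 := hPQpos.trace_mul_nonneg hSS
  have hprod : 0 ≤ lam * Lam := mul_nonneg hlam (hlam.trans hlamLam)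
  nlinarith [mul_nonneg (sq_nonneg Lam) h1, mul_nonneg (sq_nonneg lam) h2, mul_nonneg hprod h3]

theorem trace_mul_self_fin_two {R : Type*} [CommRing R] (X : Matrix (Fin 2) (Fin 2) R) :
    (X * X).trace = X.trace ^ 2 - 2 * X.det := by
  simp only [trace_fin_two, det_fin_two, mul_apply, Fin.sum_univ_two]
  ring

theorem adjugate_fin_two_eq_trace_smul_sub {R : Type*} [CommRing R] (M : Matrix (Fin 2) (Fin 2) R) :
    M.adjugate = M.trace • 1 - M := by
  ext i j
  fin_cases i <;> fin_cases j <;> simp [adjugate_fin_two, trace_fin_two]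

theorem inv_mulVec_dotProduct_fin_two {K : Type*} [Field K] (M : Matrix (Fin 2) (Fin 2) K)
    (v : Fin 2 → K) : M⁻¹ *ᵥ v ⬝ᵥ v = (M.trace * (v ⬝ᵥ v) - M *ᵥ v ⬝ᵥ v) / M.det := by
  rw [inv_def, adjugate_fin_two_eq_trace_smul_sub, Ring.inverse_eq_inv', smul_mulVec, sub_mulVec,
    smul_mulVec, one_mulVec, smul_dotProduct, sub_dotProduct, smul_dotProduct, smul_eq_mul,
    smul_eq_mul, div_eq_inv_mul]

theorem PosDef.inv_mulVec_dotProduct_le_fin_two {M : Matrix (Fin 2) (Fin 2) ℝ} (hM : M.PosDef)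
    (v : Fin 2 → ℝ) : M⁻¹ *ᵥ v ⬝ᵥ v ≤ M.trace / M.det * (v ⬝ᵥ v) := by
  have hMv : 0 ≤ M *ᵥ v ⬝ᵥ v := by
    simpa [dotProduct_comm, star_trivial] using hM.posSemidef.dotProduct_mulVec_nonneg v
  rw [inv_mulVec_dotProduct_fin_two, div_mul_eq_mul_div]
  gcongr
  · exact hM.det_pos.le
  · linarith

theorem PosDef.div_trace_le_inv_mulVec_dotProduct_fin_two {M : Matrix (Fin 2) (Fin 2) ℝ}
    (hM : M.PosDef) (v : Fin 2 → ℝ) : (v ⬝ᵥ v) / M.trace ≤ M⁻¹ *ᵥ v ⬝ᵥ v := by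
  have hsymm : M 1 0 = M 0 1 := hM.isHermitian.apply 0 1
  rw [inv_mulVec_dotProduct_fin_two, div_le_div_iff₀ hM.trace_pos hM.det_pos]
  -- the gap is `|adjugate M *ᵥ v|²`
  simp only [dotProduct, mulVec, trace_fin_two, det_fin_two, Fin.sum_univ_two, hsymm]
  nlinarith [sq_nonneg (M 1 1 * v 0 - M 0 1 * v 1), sq_nonneg (M 0 0 * v 1 - M 0 1 * v 0)]

theorem PosDef.inv_mulVec_dotProduct_bounds_fin_two {M : Matrix (Fin 2) (Fin 2) ℝ}
    (hM : M.PosDef) {k c : ℝ} (hk : 0 < k) (hdet : M.det = k ^ 2) (htrace : M.trace ≤ c * k)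
    (v : Fin 2 → ℝ) :
    c⁻¹ * k⁻¹ * (v ⬝ᵥ v) ≤ M⁻¹ *ᵥ v ⬝ᵥ v ∧ M⁻¹ *ᵥ v ⬝ᵥ v ≤ c * k⁻¹ * (v ⬝ᵥ v) := by
  have hv : 0 ≤ v ⬝ᵥ v := dotProduct_self_star_nonneg v
  constructor
  · calc c⁻¹ * k⁻¹ * (v ⬝ᵥ v) = (v ⬝ᵥ v) / (c * k) := by ring
      _ ≤ (v ⬝ᵥ v) / M.trace := div_le_div_of_nonneg_left hv hM.trace_pos htrace
      _ ≤ M⁻¹ *ᵥ v ⬝ᵥ v := hM.div_trace_le_inv_mulVec_dotProduct_fin_two v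
  · calc M⁻¹ *ᵥ v ⬝ᵥ v ≤ M.trace / M.det * (v ⬝ᵥ v) := hM.inv_mulVec_dotProduct_le_fin_two v
      _ ≤ c * k / k ^ 2 * (v ⬝ᵥ v) := by rw [hdet]; gcongr
      _ = c * k⁻¹ * (v ⬝ᵥ v) := by field_simp

theorem trace_mul_mul_mul_eq_neg_two_mul_det_of_trace_mul_eq_zero {R : Type*} [CommRing R]
    {A S : Matrix (Fin 2) (Fin 2) R} (htr : (A * S).trace = 0) :
    (A * S * A * S).trace = -2 * (A * S).det := by
  rw [Matrix.mul_assoc (A * S), trace_mul_self_fin_two, htr]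
  ring

theorem det_mul_neg_of_trace_mul_eq_zero {A S : Matrix (Fin 2) (Fin 2) ℝ} (hA : A.PosDef)
    (hS : S.IsSymm) (hSdet : S.det ≠ 0) (htr : (A * S).trace = 0) : (A * S).det < 0 := by
  have hnonneg := hA.posSemidef.trace_mul_nonneg (hA.posSemidef.mul_mul_same_of_isSymm hS)
  rw [← Matrix.mul_assoc, ← Matrix.mul_assoc,
    trace_mul_mul_mul_eq_neg_two_mul_det_of_trace_mul_eq_zero htr] at hnonneg
  have hne : (A * S).det ≠ 0 := by rw [det_mul]; exact mul_ne_zero hA.det_pos.ne' hSdet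
  exact lt_of_le_of_ne (by linarith) hne

theorem trace_conj_sq_le_of_trace_mul_eq_zero {A S : Matrix (Fin 2) (Fin 2) ℝ} (hS : S.IsSymm)
    {lam Lam : ℝ} (hlam : 0 < lam) (hlamLam : lam ≤ Lam)
    (hlow : (A - lam • 1).PosSemidef) (hupp : (Lam • 1 - A).PosSemidef)
    (htr : (A * S).trace = 0) :
    (S * (A * A) * S).trace ≤ (Lam / lam + lam / Lam) * -(A * S).det := by
  have hLam : 0 < Lam := hlam.trans_le hlamLam
  have h := two_mul_mul_trace_conj_sq_le hS hlam.le hlamLam hlow hupp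
  rw [trace_mul_mul_mul_eq_neg_two_mul_det_of_trace_mul_eq_zero htr] at h
  rw [div_add_div _ _ hlam.ne' hLam.ne', div_mul_eq_mul_div, le_div_iff₀ (by positivity)]
  linarith

end Matrix

/-- Let `A`, `S` be 2×2 real symmetric matrices with `tr(A S) = 0`, `S`
invertible, and `λ I ≤ A ≤ Λ I` for `0 < λ ≤ Λ`. With `K = det(A) det(S)`, `M = S A² S`
and `c = (Λ/λ)² (Λ/λ + λ/Λ)`, one has `K < 0`, `M` is positive definite, and for all `v`:
`c⁻¹ (−1/K) |v|² ≤ ⟨M⁻¹ v, v⟩ ≤ c (−1/K) |v|²`. -/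
theorem pullback_metric_comparison
    (A S : Matrix (Fin 2) (Fin 2) ℝ) (hA : A.IsSymm) (hS : S.IsSymm)
    (htr : (A * S).trace = 0) (hSinv : IsUnit S.det)
    (lam Lam : ℝ) (hlam : 0 < lam) (hlamLam : lam ≤ Lam)
    (hlow : (A - lam • (1 : Matrix (Fin 2) (Fin 2) ℝ)).PosSemidef)
    (hupp : ((Lam • (1 : Matrix (Fin 2) (Fin 2) ℝ)) - A).PosSemidef)
    (K : ℝ) (hK : K = A.det * S.det)
    (M : Matrix (Fin 2) (Fin 2) ℝ) (hM : M = S * (A * A) * S)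
    (c : ℝ) (hc : c = (Lam / lam) ^ 2 * (Lam / lam + lam / Lam)) :
    K < 0 ∧ M.PosDef ∧
      ∀ v : Fin 2 → ℝ,
        c⁻¹ * (-1 / K) * (∑ i, v i ^ 2) ≤ M⁻¹.mulVec v ⬝ᵥ v ∧
          M⁻¹.mulVec v ⬝ᵥ v ≤ c * (-1 / K) * (∑ i, v i ^ 2) := by
  have hApos : A.PosDef := by simpa using (PosDef.one.smul hlam).add_posSemidef hlow
  have hdet : (A * S).det = K := by rw [det_mul, hK]
  have hKneg : K < 0 := hdet ▸ det_mul_neg_of_trace_mul_eq_zero hApos hS hSinv.ne_zero htr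
  have hMgram : M = (A * S)ᴴ * (A * S) :=
    hM.trans (mul_mul_mul_eq_conjTranspose_mul_self_of_isSymm hA hS)
  have hXunit : IsUnit (A * S) :=
    (isUnit_iff_isUnit_det _).mpr (hdet ▸ isUnit_iff_ne_zero.mpr hKneg.ne)
  have hMpos : M.PosDef :=
    hMgram ▸ PosDef.conjTranspose_mul_self _ (mulVec_injective_of_isUnit hXunit)
  have hMdet : M.det = K ^ 2 := by
    rw [hMgram, det_mul, det_conjTranspose, hdet, star_trivial, sq]
  have hMtrace : M.trace ≤ c * -K := by
    have hLam : 0 < Lam := hlam.trans_le hlamLam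
    have hc' : Lam / lam + lam / Lam ≤ c := by
      rw [hc]
      refine le_mul_of_one_le_left (by positivity) (one_le_pow₀ ?_)
      rwa [one_le_div hlam]
    rw [hM, ← hdet]
    exact (trace_conj_sq_le_of_trace_mul_eq_zero hS hlam hlamLam hlow hupp htr).trans
      (mul_le_mul_of_nonneg_right hc' (by linarith))
  refine ⟨hKneg, hMpos, fun v => ?_⟩
  have hsum : ∑ i, v i ^ 2 = v ⬝ᵥ v := by simp [dotProduct, sq]
  rw [hsum, div_eq_mul_inv, neg_one_mul, ← inv_neg]
  exact hMpos.inv_mulVec_dotProduct_bounds_fin_two (neg_pos.mpr hKneg) (by rw [hMdet, neg_sq])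
    hMtrace v
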